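/- arXiv:math/9904020 — 4 statements merged into one kernel-verified Lean document; each statement's English description precedes it below -/
import Mathlib

section
/- Any bijection φ of Q̂ = Q ∪ {∞} that preserves the relation ⊥ in both directions (α ⊥ β iff φ(α) ⊥ φ(β)) and fixes the three elements ∞ = (1,0), 0 = (0,1), and 1 = (1,1) is the identity map. -/
/-- The determinant of two integer vectors. -/
def det (v w : ℤ × ℤ) : ℤ := v.1 * w.2 - w.1 * v.2

/-- The unimodular (Farey) relation: determinant `±1`. -/
def FareyPair (v w : ℤ × ℤ) : Prop := det v w = 1 ∨ det v w = -1

/-- Coprime integer pairs. -/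
abbrev CP : Type := {v : ℤ × ℤ // IsCoprime v.1 v.2}

instance cpSetoid : Setoid CP where
  r v w := v.1 = w.1 ∨ v.1 = -w.1
  iseqv := by
    refine ⟨fun _ => Or.inl rfl, ?_, ?_⟩
    · rintro v w (h | h)
      · exact Or.inl h.symm
      · exact Or.inr (by rw [h, neg_neg])
    · rintro u v w (h1 | h1) (h2 | h2)
      · exact Or.inl (h1.trans h2)
      · exact Or.inr (h1.trans h2)
      · exact Or.inr (by rw [h1, h2])
      · exact Or.inl (by rw [h1, h2, neg_neg])

/-- `Q̂ = Q ∪ {∞}`: coprime integer pairs up to sign. -/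
def Qhat : Type := Quotient cpSetoid

def Qhat.mk (v : ℤ × ℤ) (h : IsCoprime v.1 v.2) : Qhat := ⟦⟨v, h⟩⟧

lemma det_neg_left (v w : ℤ × ℤ) : det (-v) w = -(det v w) := by
  simp only [det, Prod.fst_neg, Prod.snd_neg]; ring

lemma det_neg_right (v w : ℤ × ℤ) : det v (-w) = -(det v w) := by
  simp only [det, Prod.fst_neg, Prod.snd_neg]; ring

lemma fareyPair_neg_left (v w : ℤ × ℤ) : FareyPair (-v) w ↔ FareyPair v w := by
  unfold FareyPair; rw [det_neg_left]; omega

lemma fareyPair_neg_right (v w : ℤ × ℤ) : FareyPair v (-w) ↔ FareyPair v w := by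
  unfold FareyPair; rw [det_neg_right]; omega

lemma farey_well {a b a' b' : CP} (ha : a ≈ a') (hb : b ≈ b') :
    FareyPair a.1 b.1 ↔ FareyPair a'.1 b'.1 := by
  rcases ha with h | h <;> rcases hb with h' | h' <;> rw [h, h'] <;>
    simp [fareyPair_neg_left, fareyPair_neg_right]

/-- The Farey relation on `Q̂`. -/
def Frel : Qhat → Qhat → Prop :=
  Quotient.lift₂ (fun v w : CP => FareyPair v.1 w.1)
    (fun _ _ _ _ ha hb => propext (farey_well ha hb))

/-- The product (signed mediant): for `λ = det v w`, `(p + λ p', q + λ q')`. -/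
def fmul (v w : ℤ × ℤ) : ℤ × ℤ := (v.1 + det v w * w.1, v.2 + det v w * w.2)

lemma isCoprime_of_det {v w : ℤ × ℤ} (h : det v w = 1 ∨ det v w = -1) :
    IsCoprime v.1 v.2 := by
  rcases h with h | h
  · exact ⟨w.2, -w.1, by simp only [det] at h; linarith [h]⟩
  · exact ⟨-w.2, w.1, by simp only [det] at h; linarith [h]⟩

lemma isCoprime_fmul {v w : ℤ × ℤ} (h : FareyPair v w) :
    IsCoprime (fmul v w).1 (fmul v w).2 := by
  have h2 : det v w * det v w = 1 := by rcases h with h | h <;> rw [h] <;> ring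
  refine ⟨det v w * w.2, -(det v w * w.1), ?_⟩
  simp only [fmul, det] at h2 ⊢
  linear_combination h2

/-- The product on `Q̂`, defined for Farey-related representatives. -/
def qprod (v w : CP) (h : FareyPair v.1 w.1) : Qhat :=
  Qhat.mk (fmul v.1 w.1) (isCoprime_fmul h)

/-- Height `|p| + |q|` on `Q̂`. -/
def qheight : Qhat → ℕ :=
  Quotient.lift (fun v : CP => v.1.1.natAbs + v.1.2.natAbs)
    (by rintro v w (h | h) <;>
      simp only [h, Prod.fst_neg, Prod.snd_neg, Int.natAbs_neg])

/-- Action of an integer matrix on `ℤ × ℤ`. -/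
def matAct (A : Matrix (Fin 2) (Fin 2) ℤ) (v : ℤ × ℤ) : ℤ × ℤ :=
  (A 0 0 * v.1 + A 0 1 * v.2, A 1 0 * v.1 + A 1 1 * v.2)

lemma det_matAct (A : Matrix (Fin 2) (Fin 2) ℤ) (v w : ℤ × ℤ) :
    det (matAct A v) (matAct A w) = A.det * det v w := by
  simp only [matAct, det, Matrix.det_fin_two]; ring

lemma isCoprime_matAct (A : GL (Fin 2) ℤ) (v : ℤ × ℤ) (h : IsCoprime v.1 v.2) :
    IsCoprime (matAct (A : Matrix (Fin 2) (Fin 2) ℤ) v).1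
      (matAct (A : Matrix (Fin 2) (Fin 2) ℤ) v).2 := by
  obtain ⟨x, y, hxy⟩ := h
  have hdv : det v (-y, x) = 1 := by simp only [det]; linarith [hxy]
  have hdA : (A : Matrix (Fin 2) (Fin 2) ℤ).det = 1 ∨
      (A : Matrix (Fin 2) (Fin 2) ℤ).det = -1 := by
    have : IsUnit (A : Matrix (Fin 2) (Fin 2) ℤ).det :=
      (Matrix.isUnit_iff_isUnit_det _).mp A.isUnit
    rwa [Int.isUnit_iff] at this
  apply isCoprime_of_det (w := matAct (A : Matrix (Fin 2) (Fin 2) ℤ) (-y, x))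
  rw [det_matAct, hdv, mul_one]
  exact hdA

lemma matAct_neg (A : Matrix (Fin 2) (Fin 2) ℤ) (v : ℤ × ℤ) :
    matAct A (-v) = -(matAct A v) := by
  simp only [matAct, Prod.fst_neg, Prod.snd_neg, Prod.neg_mk, Prod.mk.injEq]
  constructor <;> ring

/-- The action of `GL(2,ℤ)` on `Q̂`. -/
def qAct (A : GL (Fin 2) ℤ) : Qhat → Qhat :=
  Quotient.lift
    (fun v : CP => (⟦⟨matAct (A : Matrix (Fin 2) (Fin 2) ℤ) v.1,
      isCoprime_matAct A v.1 v.2⟩⟧ : Qhat))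
    (by
      rintro v w (h | h)
      · exact Quotient.sound
          (Or.inl (congrArg (matAct (A : Matrix (Fin 2) (Fin 2) ℤ)) h))
      · refine Quotient.sound (Or.inr ?_)
        show matAct (A : Matrix (Fin 2) (Fin 2) ℤ) v.1 =
          -(matAct (A : Matrix (Fin 2) (Fin 2) ℤ) w.1)
        rw [h, matAct_neg])

lemma isCoprime_one_zero : IsCoprime (1 : ℤ) (0 : ℤ) := isCoprime_one_left
lemma isCoprime_zero_one : IsCoprime (0 : ℤ) (1 : ℤ) := isCoprime_one_right
lemma isCoprime_one_one : IsCoprime (1 : ℤ) (1 : ℤ) := isCoprime_one_left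

/-- The point `∞ = (1,0)`. -/
def qinf : Qhat := Qhat.mk (1, 0) isCoprime_one_zero
/-- The point `0 = (0,1)`. -/
def qzero : Qhat := Qhat.mk (0, 1) isCoprime_zero_one
/-- The point `1 = (1,1)`. -/
def qone : Qhat := Qhat.mk (1, 1) isCoprime_one_one

lemma core_xy (p q : ℤ) (hp : 1 ≤ p) (hq : 1 ≤ q) (hco : IsCoprime p q) :
    ∃ x y : ℤ, 0 ≤ x ∧ x < p ∧ 1 ≤ y ∧ y ≤ q ∧ x * q + 1 = y * p := by
  obtain ⟨u, v, huv⟩ := hco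
  refine ⟨(-v) % p, u - ((-v) / p) * q, Int.emod_nonneg _ (by omega),
    Int.emod_lt_of_pos _ (by omega), ?_, ?_, ?_⟩
  · have key : ((-v) % p) * q + 1 = (u - ((-v) / p) * q) * p := by
      rw [Int.emod_def]; linear_combination -huv
    have h1 : 0 < ((-v) % p) * q + 1 := by
      have := Int.emod_nonneg (-v) (show p ≠ 0 by omega)
      positivity
    nlinarith
  · have key : ((-v) % p) * q + 1 = (u - ((-v) / p) * q) * p := by
      rw [Int.emod_def]; linear_combination -huv
    have hx : (-v) % p < p := Int.emod_lt_of_pos _ (by omega)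
    nlinarith
  · rw [Int.emod_def]; linear_combination -huv

lemma neighbor_classify {b c d : ℤ × ℤ} (hbc : FareyPair b c)
    (hdb : FareyPair d b) (hdc : FareyPair d c) :
    d = b + c ∨ d = -(b + c) ∨ d = b - c ∨ d = -(b - c) := by
  obtain ⟨b1, b2⟩ := b; obtain ⟨c1, c2⟩ := c; obtain ⟨d1, d2⟩ := d
  simp only [FareyPair, det] at hbc hdb hdc
  have hDD : (b1 * c2 - c1 * b2) * (b1 * c2 - c1 * b2) = 1 := by
    rcases hbc with h | h <;> rw [h] <;> ring
  have hd1 : d1 = ((b1 * c2 - c1 * b2) * (d1 * c2 - c1 * d2)) * b1 +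
      ((b1 * c2 - c1 * b2) * (b1 * d2 - d1 * b2)) * c1 := by
    linear_combination (-d1) * hDD
  have hd2 : d2 = ((b1 * c2 - c1 * b2) * (d1 * c2 - c1 * d2)) * b2 +
      ((b1 * c2 - c1 * b2) * (b1 * d2 - d1 * b2)) * c2 := by
    linear_combination (-d2) * hDD
  have hu : (b1 * c2 - c1 * b2) * (d1 * c2 - c1 * d2) = 1 ∨
      (b1 * c2 - c1 * b2) * (d1 * c2 - c1 * d2) = -1 := by
    rcases hbc with h | h <;> rcases hdc with h2 | h2 <;> rw [h, h2] <;> norm_num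
  have hw : (b1 * c2 - c1 * b2) * (b1 * d2 - d1 * b2) = 1 ∨
      (b1 * c2 - c1 * b2) * (b1 * d2 - d1 * b2) = -1 := by
    have : b1 * d2 - d1 * b2 = -(d1 * b2 - b1 * d2) := by ring
    rcases hbc with h | h <;> rcases hdb with h1 | h1 <;>
      rw [h, this, h1] <;> norm_num
  rcases hu with hu | hu <;> rcases hw with hw | hw <;> rw [hu, hw] at hd1 hd2
  · exact Or.inl (by simp [Prod.ext_iff]; constructor <;> linarith)
  · exact Or.inr (Or.inr (Or.inl (by simp [Prod.ext_iff]; constructor <;> linarith)))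
  · exact Or.inr (Or.inr (Or.inr (by simp [Prod.ext_iff]; constructor <;> linarith)))
  · exact Or.inr (Or.inl (by simp [Prod.ext_iff]; constructor <;> linarith))

lemma parents_pos (p q : ℤ) (hp : 1 ≤ p) (hq : 1 ≤ q) (h3 : 3 ≤ p + q)
    (hco : IsCoprime p q) :
    ∃ b c : ℤ × ℤ, FareyPair b c ∧ b + c = (p, q) ∧
      b.1.natAbs + b.2.natAbs < p.natAbs + q.natAbs ∧
      c.1.natAbs + c.2.natAbs < p.natAbs + q.natAbs ∧
      (b.1 - c.1).natAbs + (b.2 - c.2).natAbs < p.natAbs + q.natAbs := by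
  obtain ⟨x, y, hx0, hxp, hy1, hyq, hxy⟩ := core_xy p q hp hq hco
  have hexc : ¬(x = 0 ∧ y = q) := by
    rintro ⟨rfl, h⟩
    have h1 : y * p = 1 := by linarith
    nlinarith [mul_nonneg (show (0:ℤ) ≤ p - 1 by linarith) (show (0:ℤ) ≤ y - 1 by linarith)]
  refine ⟨(x, y), (p - x, q - y), Or.inr ?_, by simp, ?_, ?_, ?_⟩
  · show x * (q - y) - (p - x) * y = -1
    linear_combination hxy
  · simp only; omega
  · simp only; omega
  · simp only; omega

lemma fareyPair_negFst {a b : ℤ × ℤ} (h : FareyPair a b) :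
    FareyPair (-a.1, a.2) (-b.1, b.2) := by
  unfold FareyPair det at h ⊢
  rcases h with h | h
  · exact Or.inr (by dsimp only; linear_combination -h)
  · exact Or.inl (by dsimp only; linear_combination -h)

lemma fareyPair_symm {a b : ℤ × ℤ} (h : FareyPair a b) : FareyPair b a := by
  unfold FareyPair det at h ⊢; omega

lemma exists_parents (p q : ℤ) (hco : IsCoprime p q) (hp : p ≠ 0) (hq : q ≠ 0)
    (h3 : 3 ≤ p.natAbs + q.natAbs) :
    ∃ b c : ℤ × ℤ, FareyPair b c ∧ b + c = (p, q) ∧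
      b.1.natAbs + b.2.natAbs < p.natAbs + q.natAbs ∧
      c.1.natAbs + c.2.natAbs < p.natAbs + q.natAbs ∧
      (b.1 - c.1).natAbs + (b.2 - c.2).natAbs < p.natAbs + q.natAbs := by
  -- first reduce to q > 0
  have key : ∀ p q : ℤ, IsCoprime p q → p ≠ 0 → 0 < q → 3 ≤ p.natAbs + q.natAbs →
      ∃ b c : ℤ × ℤ, FareyPair b c ∧ b + c = (p, q) ∧
        b.1.natAbs + b.2.natAbs < p.natAbs + q.natAbs ∧
        c.1.natAbs + c.2.natAbs < p.natAbs + q.natAbs ∧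
        (b.1 - c.1).natAbs + (b.2 - c.2).natAbs < p.natAbs + q.natAbs := by
    intro p q hco hp hq h3
    rcases lt_or_gt_of_ne hp with hneg | hpos
    · -- p < 0 : apply to (-p, q) and flip first coordinates
      have hco' : IsCoprime (-p) q := hco.neg_left
      obtain ⟨b, c, hbc, hsum, h1, h2, h4⟩ :=
        parents_pos (-p) q (by omega) hq (by omega) hco'
      have hb1 : b.1 + c.1 = -p := congrArg Prod.fst hsum
      have hb2 : b.2 + c.2 = q := congrArg Prod.snd hsum
      refine ⟨(-b.1, b.2), (-c.1, c.2), fareyPair_negFst hbc, ?_, ?_, ?_, ?_⟩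
      · simp only [Prod.mk_add_mk, Prod.mk.injEq]; omega
      all_goals simp only; omega
    · obtain ⟨b, c, hbc, hsum, h1, h2, h4⟩ :=
        parents_pos p q hpos hq (by omega) hco
      exact ⟨b, c, hbc, hsum, h1, h2, h4⟩
  rcases lt_or_gt_of_ne hq with hqneg | hqpos
  · obtain ⟨b, c, hbc, hsum, h1, h2, h4⟩ :=
      key (-p) (-q) (hco.neg_left.neg_right) (by omega) (by omega) (by omega)
    have hb1 : b.1 + c.1 = -p := congrArg Prod.fst hsum
    have hb2 : b.2 + c.2 = -q := congrArg Prod.snd hsum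
    refine ⟨-b, -c, ?_, ?_, ?_, ?_, ?_⟩
    · rcases hbc with h | h
      · exact Or.inl (by rw [det_neg_left, det_neg_right, neg_neg]; exact h)
      · exact Or.inr (by rw [det_neg_left, det_neg_right, neg_neg]; exact h)
    · have : -b + -c = -(b + c) := by ring
      rw [this, hsum]; simp
    all_goals simp only [Prod.fst_neg, Prod.snd_neg] <;> omega
  · exact key p q hco hp hqpos h3
lemma mk_eq_mk {v w : ℤ × ℤ} (hv : IsCoprime v.1 v.2) (hw : IsCoprime w.1 w.2) :
    Qhat.mk v hv = Qhat.mk w hw ↔ (v = w ∨ v = -w) := by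
  constructor
  · intro h; exact Quotient.exact h
  · intro h; exact Quotient.sound h

lemma qheight_mk (v : ℤ × ℤ) (h : IsCoprime v.1 v.2) :
    qheight (Qhat.mk v h) = v.1.natAbs + v.2.natAbs := rfl
theorem stmt_7 (φ : Qhat → Qhat) (hbij : Function.Bijective φ)
    (hrel : ∀ α β : Qhat, Frel α β ↔ Frel (φ α) (φ β))
    (hinf : φ qinf = qinf) (hzero : φ qzero = qzero) (hone : φ qone = qone) :
    ∀ α, φ α = α := by
  have hm1co : IsCoprime (1 : ℤ) (-1 : ℤ) := isCoprime_one_left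
  set qm1 : Qhat := Qhat.mk (1, -1) hm1co with hqm1def
  have hne : qm1 ≠ qone := by
    intro h
    rcases Quotient.exact h with h' | h' <;>
      simp only [Prod.ext_iff, Prod.fst_neg, Prod.snd_neg] at h' <;> omega
  have hqm1 : φ qm1 = qm1 := by
    have h1 : Frel qm1 qinf := Or.inl (by norm_num [det])
    have h2 : Frel qm1 qzero := Or.inl (by norm_num [det])
    have h1' : Frel (φ qm1) qinf := by rw [← hinf]; exact (hrel _ _).mp h1
    have h2' : Frel (φ qm1) qzero := by rw [← hzero]; exact (hrel _ _).mp h2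
    obtain ⟨⟨d, hd⟩, he⟩ := Quotient.exists_rep (φ qm1)
    rw [← he] at h1' h2' ⊢
    have hdb : FareyPair d (1, 0) := h1'
    have hdc : FareyPair d (0, 1) := h2'
    have hbc : FareyPair ((1 : ℤ), (0 : ℤ)) ((0 : ℤ), (1 : ℤ)) := Or.inl (by norm_num [det])
    have hsound : ∀ (w : ℤ × ℤ) (hw : IsCoprime w.1 w.2),
        (d = w ∨ d = -w) → φ qm1 = Qhat.mk w hw := by
      intro w hw hdw; rw [← he]; exact Quotient.sound hdw
    rcases neighbor_classify hbc hdb hdc with h | h | h | h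
    · exact absurd (hbij.injective ((hsound (1, 1) isCoprime_one_one
        (Or.inl (h.trans (by norm_num [Prod.ext_iff])))).trans hone.symm)) hne
    · exact absurd (hbij.injective ((hsound (1, 1) isCoprime_one_one
        (Or.inr (h.trans (by norm_num [Prod.ext_iff])))).trans hone.symm)) hne
    · rw [he]
      exact hsound (1, -1) hm1co (Or.inl (h.trans (by norm_num [Prod.ext_iff])))
    · rw [he]
      exact hsound (1, -1) hm1co (Or.inr (h.trans (by norm_num [Prod.ext_iff])))
  have main : ∀ n : ℕ, ∀ α : Qhat, qheight α = n → φ α = α := by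
    intro n
    induction n using Nat.strong_induction_on with
    | _ n IH =>
      intro α hα
      obtain ⟨⟨⟨p, q⟩, hpq⟩, rfl⟩ := Quotient.exists_rep α
      have hn : p.natAbs + q.natAbs = n := hα
      have hpq' : IsCoprime p q := hpq
      by_cases hp : p = 0
      · subst hp
        have hqu : IsUnit q := isCoprime_zero_left.mp hpq'
        have hαz : (⟦⟨((0 : ℤ), q), hpq⟩⟧ : Qhat) = qzero := by
          rcases Int.isUnit_iff.mp hqu with rfl | rfl
          · exact Quotient.sound (Or.inl rfl)
          · exact Quotient.sound (Or.inr (by norm_num [Prod.ext_iff]))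
        rw [hαz, hzero]
      by_cases hq : q = 0
      · subst hq
        have hpu : IsUnit p := isCoprime_zero_right.mp hpq'
        have hαz : (⟦⟨(p, (0 : ℤ)), hpq⟩⟧ : Qhat) = qinf := by
          rcases Int.isUnit_iff.mp hpu with rfl | rfl
          · exact Quotient.sound (Or.inl rfl)
          · exact Quotient.sound (Or.inr (by norm_num [Prod.ext_iff]))
        rw [hαz, hinf]
      by_cases hsmall : p.natAbs + q.natAbs ≤ 2
      · have h1 : p = 1 ∨ p = -1 := by omega
        have h2 : q = 1 ∨ q = -1 := by omega
        rcases h1 with rfl | rfl <;> rcases h2 with rfl | rfl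
        · have : (⟦⟨((1 : ℤ), (1 : ℤ)), hpq⟩⟧ : Qhat) = qone :=
            Quotient.sound (Or.inl rfl)
          rw [this, hone]
        · have : (⟦⟨((1 : ℤ), (-1 : ℤ)), hpq⟩⟧ : Qhat) = qm1 :=
            Quotient.sound (Or.inl rfl)
          rw [this, hqm1]
        · have : (⟦⟨((-1 : ℤ), (1 : ℤ)), hpq⟩⟧ : Qhat) = qm1 :=
            Quotient.sound (Or.inr (by norm_num [Prod.ext_iff]))
          rw [this, hqm1]
        · have : (⟦⟨((-1 : ℤ), (-1 : ℤ)), hpq⟩⟧ : Qhat) = qone :=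
            Quotient.sound (Or.inr (by norm_num [Prod.ext_iff]))
          rw [this, hone]
      -- main inductive step
      obtain ⟨b, c, hbc, hsum, hhb, hhc, hhd⟩ :=
        exists_parents p q hpq' hp hq (by omega)
      have hb1 : b.1 + c.1 = p := congrArg Prod.fst hsum
      have hb2 : b.2 + c.2 = q := congrArg Prod.snd hsum
      have hcb : FareyPair c b := fareyPair_symm hbc
      have hbco : IsCoprime b.1 b.2 := isCoprime_of_det hbc
      have hcco : IsCoprime c.1 c.2 := isCoprime_of_det hcb
      have hdiffFP : FareyPair (b - c) c := by
        rcases hbc with h | h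
        · exact Or.inl (by simp only [det, Prod.fst_sub, Prod.snd_sub] at h ⊢; linarith)
        · exact Or.inr (by simp only [det, Prod.fst_sub, Prod.snd_sub] at h ⊢; linarith)
      have hdco : IsCoprime (b - c).1 (b - c).2 := isCoprime_of_det hdiffFP
      set β : Qhat := Qhat.mk b hbco with hβ
      set γ : Qhat := Qhat.mk c hcco with hγ
      set δq : Qhat := Qhat.mk (b - c) hdco with hδ
      have hqβ : qheight β = b.1.natAbs + b.2.natAbs := rfl
      have hqγ : qheight γ = c.1.natAbs + c.2.natAbs := rfl
      have hφβ : φ β = β := IH _ (by omega) β rfl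
      have hφγ : φ γ = γ := IH _ (by omega) γ rfl
      have hφδ : φ δq = δq := by
        refine IH _ ?_ δq rfl
        have : qheight δq = (b - c).1.natAbs + (b - c).2.natAbs := rfl
        simp only [this, Prod.fst_sub, Prod.snd_sub]
        omega
      have hαβ : Frel (⟦⟨(p, q), hpq⟩⟧ : Qhat) β := by
        show FareyPair (p, q) b
        rcases hbc with h | h
        · refine Or.inr ?_
          show p * b.2 - b.1 * q = -1
          simp only [det] at h
          linear_combination b.2 * hb1.symm - b.1 * hb2.symm - h
        · refine Or.inl ?_
          show p * b.2 - b.1 * q = 1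
          simp only [det] at h
          linear_combination b.2 * hb1.symm - b.1 * hb2.symm - h
      have hαγ : Frel (⟦⟨(p, q), hpq⟩⟧ : Qhat) γ := by
        show FareyPair (p, q) c
        rcases hbc with h | h
        · refine Or.inl ?_
          show p * c.2 - c.1 * q = 1
          simp only [det] at h
          linear_combination c.2 * hb1.symm - c.1 * hb2.symm + h
        · refine Or.inr ?_
          show p * c.2 - c.1 * q = -1
          simp only [det] at h
          linear_combination c.2 * hb1.symm - c.1 * hb2.symm + h
      have h1' : Frel (φ ⟦⟨(p, q), hpq⟩⟧) β := by
        rw [← hφβ]; exact (hrel _ _).mp hαβ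
      have h2' : Frel (φ ⟦⟨(p, q), hpq⟩⟧) γ := by
        rw [← hφγ]; exact (hrel _ _).mp hαγ
      obtain ⟨⟨e, hec⟩, he⟩ := Quotient.exists_rep (φ (⟦⟨(p, q), hpq⟩⟧ : Qhat))
      rw [← he] at h1' h2'
      have heb : FareyPair e b := h1'
      have hegc : FareyPair e c := h2'
      have hcase := neighbor_classify hbc heb hegc
      rw [hsum] at hcase
      rcases hcase with h | h | h | h
      · rw [← he]; exact Quotient.sound (Or.inl h)
      · rw [← he]; exact Quotient.sound (Or.inr h)
      · have hφα : φ (⟦⟨(p, q), hpq⟩⟧ : Qhat) = δq := by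
          rw [← he]; exact Quotient.sound (Or.inl h)
        have hαδ : (⟦⟨(p, q), hpq⟩⟧ : Qhat) = δq :=
          hbij.injective (by rw [hφα, hφδ])
        rw [hαδ, hφδ]
      · have hφα : φ (⟦⟨(p, q), hpq⟩⟧ : Qhat) = δq := by
          rw [← he]; exact Quotient.sound (Or.inr h)
        have hαδ : (⟦⟨(p, q), hpq⟩⟧ : Qhat) = δq :=
          hbij.injective (by rw [hφα, hφδ])
        rw [hαδ, hφδ]
  exact fun α => main (qheight α) α rfl
end

section
/- The three elements ∞ = (1,0), 0 = (0,1), and 1 = (1,1) of Q̂ are pairwise ⊥-related, and they generate Q̂ under the product operation: the smallest subset X of Q̂ containing {∞, 0, 1} and closed under the operation (α, β) ↦ (p + λp', q + λq') (for α ⊥ β with λ the determinant) is all of Q̂. -/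
/-!
Every primitive vector `(p, q)` off the coordinate axes is the sum `u + w` of its two
Stern–Brocot parents: primitive vectors with `det u w = 1` and smaller `|p| + |q|`. For such a
pair the product `u w` is exactly `u + w`, so by induction on `|p| + |q|` every point of `Q̂` is
generated from `±(1, 0)` and `±(0, 1)`.
-/

namespace Farey

def height (v : ℤ × ℤ) : ℕ := v.1.natAbs + v.2.natAbs

lemma height_neg (v : ℤ × ℤ) : height (-v) = height v := by
  simp [height]

lemma exists_mul_sub_mul_eq_one {p q : ℤ} (hp : 0 < p) (hq : 0 < q) (h : IsCoprime p q) :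
    ∃ a b : ℤ, 0 < a ∧ a ≤ p ∧ 0 ≤ b ∧ b < q ∧ a * q - b * p = 1 := by
  obtain ⟨x, y, hxy⟩ := h
  -- shift the Bézout solution `(y, -x)` by a multiple of `(p, q)` to bring `a` into `[1, p]`
  set t := (y - 1) / p
  have hdiv : (y - 1) % p + p * t = y - 1 := Int.emod_add_mul_ediv (y - 1) p
  have hmod_nonneg : 0 ≤ (y - 1) % p := Int.emod_nonneg _ hp.ne'
  have hmod_lt : (y - 1) % p < p := Int.emod_lt_of_pos _ hp
  have hdet : (y - t * p) * q - (-x - t * q) * p = 1 := by linear_combination hxy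
  refine ⟨y - t * p, -x - t * q, by linarith, by linarith, ?_, ?_, hdet⟩
  · nlinarith
  · nlinarith

lemma exists_farey_parents_of_pos {p q : ℤ} (hp : 0 < p) (hq : q ≠ 0) (h : IsCoprime p q) :
    ∃ u w : ℤ × ℤ, det u w = 1 ∧ u + w = (p, q) ∧
      height u < height (p, q) ∧ height w < height (p, q) := by
  rcases hq.lt_or_gt with hq | hq
  · obtain ⟨a, b, ha, hap, hb, hbq, hab⟩ :=
      exists_mul_sub_mul_eq_one hp (neg_pos.2 hq) h.neg_right
    refine ⟨(p - a, q + b), (a, -b), ?_, by simp, ?_, ?_⟩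
    · simp only [det]; linear_combination hab
    all_goals simp only [height]; omega
  · obtain ⟨a, b, ha, hap, hb, hbq, hab⟩ := exists_mul_sub_mul_eq_one hp hq h
    refine ⟨(a, b), (p - a, q - b), ?_, by simp, ?_, ?_⟩
    · simp only [det]; linear_combination hab
    all_goals simp only [height]; omega

lemma exists_farey_parents {p q : ℤ} (hp : p ≠ 0) (hq : q ≠ 0) (h : IsCoprime p q) :
    ∃ u w : ℤ × ℤ, det u w = 1 ∧ u + w = (p, q) ∧
      height u < height (p, q) ∧ height w < height (p, q) := by
  rcases hp.lt_or_gt with hp | hp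
  · obtain ⟨u, w, hdet, hsum, hu, hw⟩ :=
      exists_farey_parents_of_pos (neg_pos.2 hp) (neg_ne_zero.2 hq) h.neg_neg
    refine ⟨-u, -w, ?_, ?_, ?_, ?_⟩
    · rw [det_neg_left, det_neg_right, neg_neg, hdet]
    · rw [← neg_add, hsum, Prod.neg_mk, neg_neg, neg_neg]
    · rwa [height_neg, ← height_neg (p, q)]
    · rwa [height_neg, ← height_neg (p, q)]
  · exact exists_farey_parents_of_pos hp hq h

def reps (X : Set Qhat) : Set (ℤ × ℤ) := {v | ∃ h : IsCoprime v.1 v.2, Qhat.mk v h ∈ X}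

section Closure

variable {X : Set Qhat}

lemma neg_mem_reps {v : ℤ × ℤ} (hv : v ∈ reps X) : -v ∈ reps X := by
  obtain ⟨h, hX⟩ := hv
  have hsign : Qhat.mk (-v) h.neg_neg = Qhat.mk v h := Quotient.sound (Or.inr rfl)
  exact ⟨h.neg_neg, hsign ▸ hX⟩

variable (hX : ∀ (v w : CP) (h : FareyPair v.1 w.1),
  (⟦v⟧ : Qhat) ∈ X → (⟦w⟧ : Qhat) ∈ X → qprod v w h ∈ X)
include hX

lemma add_mem_reps {u w : ℤ × ℤ} (hdet : det u w = 1) (hu : u ∈ reps X) (hw : w ∈ reps X) :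
    u + w ∈ reps X := by
  obtain ⟨hu, huX⟩ := hu
  obtain ⟨hw, hwX⟩ := hw
  have hfmul : fmul u w = u + w := by simp only [fmul, hdet, one_mul]; rfl
  rw [← hfmul]
  exact ⟨_, hX ⟨u, hu⟩ ⟨w, hw⟩ (Or.inl hdet) huX hwX⟩

lemma mem_reps_of_isCoprime (hinf : (1, 0) ∈ reps X) (hzero : (0, 1) ∈ reps X)
    (v : ℤ × ℤ) (hv : IsCoprime v.1 v.2) : v ∈ reps X := by
  induction hn : height v using Nat.strong_induction_on generalizing v with
  | _ n ih =>
    obtain ⟨p, q⟩ := v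
    by_cases hp : p = 0
    · subst hp
      rcases Int.isUnit_iff.1 (isCoprime_zero_left.1 hv) with rfl | rfl
      exacts [hzero, neg_mem_reps hzero]
    by_cases hq : q = 0
    · subst hq
      rcases Int.isUnit_iff.1 (isCoprime_zero_right.1 hv) with rfl | rfl
      exacts [hinf, neg_mem_reps hinf]
    obtain ⟨u, w, hdet, hsum, hu, hw⟩ := exists_farey_parents hp hq hv
    rw [← hsum]
    exact add_mem_reps hX hdet
      (ih _ (hn ▸ hu) u (isCoprime_of_det (Or.inl hdet)) rfl)
      (ih _ (hn ▸ hw) w (isCoprime_of_det (Or.inr (by unfold det at hdet ⊢; linarith))) rfl)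

end Closure

end Farey

theorem stmt_8 :
    (Frel qinf qzero ∧ Frel qzero qone ∧ Frel qinf qone) ∧
    (∀ X : Set Qhat, qinf ∈ X → qzero ∈ X → qone ∈ X →
      (∀ (v w : CP) (h : FareyPair v.1 w.1),
        (⟦v⟧ : Qhat) ∈ X → (⟦w⟧ : Qhat) ∈ X → qprod v w h ∈ X) →
      X = Set.univ) := by
  refine ⟨⟨Or.inl rfl, Or.inr rfl, Or.inl rfl⟩, fun X hinf hzero _ hX => ?_⟩
  refine Set.eq_univ_of_forall fun x => Quotient.inductionOn x fun v => ?_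
  obtain ⟨_, hv⟩ := Farey.mem_reps_of_isCoprime hX ⟨_, hinf⟩ ⟨_, hzero⟩ v.1 v.2
  exact hv
end

section
/- For any element α = (p,q) ∈ Q̂ with |p| + |q| ≥ 2 (i.e., α ∉ {0, ∞, ±1}), there exist β, γ ∈ Q̂ with β ⊥ γ, α = βγ (the product), and such that the 'heights' |p'| + |q'| of both β and γ are strictly smaller than |p| + |q|. -/
/-!
Up to the symmetries `v ↦ -v` and `(p, q) ↦ (p, -q)`, which preserve heights and (after
swapping the factors) determinants, we may take `p, q > 0`. A Bézout relation `a q - p b = 1`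
with `0 < a ≤ p` and `0 ≤ b < q` splits `(p, q) = (a, b) + (p - a, q - b)` into two vectors with
non-negative entries and determinant `1`. For determinant `1` the product `βγ` is just `β + γ`,
and the heights of two non-zero non-negative summands are both smaller than that of their sum.
-/

def height (v : ℤ × ℤ) : ℕ := v.1.natAbs + v.2.natAbs

def negSnd (v : ℤ × ℤ) : ℤ × ℤ := (v.1, -v.2)

lemma height_neg (v : ℤ × ℤ) : height (-v) = height v := by
  simp only [height, Prod.fst_neg, Prod.snd_neg, Int.natAbs_neg]

lemma height_negSnd (v : ℤ × ℤ) : height (negSnd v) = height v := by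
  simp only [height, negSnd, Int.natAbs_neg]

lemma negSnd_add (v w : ℤ × ℤ) : negSnd (v + w) = negSnd v + negSnd w := by
  simp only [negSnd, Prod.fst_add, Prod.snd_add, neg_add, Prod.mk_add_mk]

lemma det_comm (v w : ℤ × ℤ) : det w v = -det v w := by
  simp only [det]; ring

lemma det_neg_neg (v w : ℤ × ℤ) : det (-v) (-w) = det v w := by
  rw [det_neg_left, det_neg_right, neg_neg]

lemma det_negSnd (v w : ℤ × ℤ) : det (negSnd v) (negSnd w) = -det v w := by
  simp only [det, negSnd]; ring

lemma fmul_of_det_eq_one {v w : ℤ × ℤ} (h : det v w = 1) : fmul v w = v + w := by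
  simp only [fmul, h, one_mul]
  rfl

def IsFareySplit (v β γ : ℤ × ℤ) : Prop :=
  det β γ = 1 ∧ β + γ = v ∧ height β < height v ∧ height γ < height v

lemma IsFareySplit.neg {v β γ : ℤ × ℤ} (h : IsFareySplit v β γ) :
    IsFareySplit (-v) (-β) (-γ) := by
  obtain ⟨hdet, hsum, hβ, hγ⟩ := h
  refine ⟨by rw [det_neg_neg, hdet], by rw [← neg_add, hsum], ?_, ?_⟩ <;>
    simpa only [height_neg]

lemma IsFareySplit.negSnd {v β γ : ℤ × ℤ} (h : IsFareySplit v β γ) :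
    IsFareySplit (negSnd v) (negSnd γ) (negSnd β) := by
  obtain ⟨hdet, hsum, hβ, hγ⟩ := h
  refine ⟨by rw [det_negSnd, det_comm, hdet, neg_neg], by rw [← negSnd_add, add_comm, hsum],
    ?_, ?_⟩ <;> simpa only [height_negSnd]

lemma IsCoprime.exists_bezout_bounded {p q : ℤ} (hp : 0 < p) (hq : 0 < q) (h : IsCoprime p q) :
    ∃ a b : ℤ, a * q - p * b = 1 ∧ 0 < a ∧ a ≤ p ∧ 0 ≤ b ∧ b < q := by
  obtain ⟨x, y, hxy⟩ := h
  -- `a` is the representative of `y` in `(0, p]`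
  set a := (y - 1) % p + 1 with ha
  have ha_pos : 0 < a := by have := Int.emod_nonneg (y - 1) hp.ne'; omega
  have ha_le : a ≤ p := by have := Int.emod_lt_of_pos (y - 1) hp; omega
  have hay : a - y = p * -((y - 1) / p) := by rw [ha, Int.emod_def]; ring
  set b := -x - (y - 1) / p * q
  have hab : a * q - p * b = 1 := by linear_combination hxy + q * hay
  exact ⟨a, b, hab, ha_pos, ha_le, by nlinarith, by nlinarith⟩

lemma exists_isFareySplit_of_pos {p q : ℤ} (hp : 0 < p) (hq : 0 < q) (h : IsCoprime p q) :
    ∃ β γ, IsFareySplit (p, q) β γ := by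
  obtain ⟨a, b, hab, ha_pos, ha_le, hb_nonneg, hb_lt⟩ := h.exists_bezout_bounded hp hq
  refine ⟨(a, b), (p - a, q - b), ?_, ?_, ?_, ?_⟩
  · simp only [det]; linear_combination hab
  · simp only [Prod.mk_add_mk, add_sub_cancel]
  all_goals simp only [height]; omega

lemma exists_isFareySplit_of_fst_pos {v : ℤ × ℤ} (hp : 0 < v.1) (hq : v.2 ≠ 0)
    (hv : IsCoprime v.1 v.2) : ∃ β γ, IsFareySplit v β γ := by
  rcases hq.lt_or_gt with hq | hq
  · obtain ⟨β, γ, h⟩ := exists_isFareySplit_of_pos hp (neg_pos.mpr hq) hv.neg_right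
    exact ⟨_, _, by simpa [negSnd] using h.negSnd⟩
  · exact exists_isFareySplit_of_pos hp hq hv

lemma exists_isFareySplit {v : ℤ × ℤ} (hv : IsCoprime v.1 v.2) (h : 2 ≤ height v) :
    ∃ β γ, IsFareySplit v β γ := by
  -- a coprime pair with a zero entry is `(0, ±1)` or `(±1, 0)`, of height `1`
  have hp : v.1 ≠ 0 := by
    rintro hp
    rw [hp, isCoprime_zero_left, Int.isUnit_iff] at hv
    simp only [height, hp] at h
    omega
  have hq : v.2 ≠ 0 := by
    rintro hq
    rw [hq, isCoprime_zero_right, Int.isUnit_iff] at hv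
    simp only [height, hq] at h
    omega
  rcases hp.lt_or_gt with hp | hp
  · obtain ⟨β, γ, h⟩ := exists_isFareySplit_of_fst_pos (v := -v) (neg_pos.mpr hp)
      (neg_ne_zero.mpr hq) hv.neg_neg
    exact ⟨-β, -γ, by simpa using h.neg⟩
  · exact exists_isFareySplit_of_fst_pos hp hq hv

theorem stmt_9 (v : ℤ × ℤ) (hv : IsCoprime v.1 v.2)
    (h : 2 ≤ v.1.natAbs + v.2.natAbs) :
    ∃ β γ : ℤ × ℤ, IsCoprime β.1 β.2 ∧ IsCoprime γ.1 γ.2 ∧ FareyPair β γ ∧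
      (fmul β γ = v ∨ fmul β γ = -v) ∧
      β.1.natAbs + β.2.natAbs < v.1.natAbs + v.2.natAbs ∧
      γ.1.natAbs + γ.2.natAbs < v.1.natAbs + v.2.natAbs := by
  obtain ⟨β, γ, hdet, hsum, hβ, hγ⟩ := exists_isFareySplit hv h
  have hdet' : det γ β = -1 := by rw [det_comm, hdet]
  exact ⟨β, γ, isCoprime_of_det (Or.inl hdet), isCoprime_of_det (Or.inr hdet'), Or.inl hdet,
    Or.inl (by rw [fmul_of_det_eq_one hdet, hsum]), hβ, hγ⟩
end

section
/- Every edge of the Farey graph lies in exactly two triangles: for α ⊥ β in Q̂, the set {γ ∈ Q̂ : γ ⊥ α and γ ⊥ β} has exactly two elements. -/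
lemma cop_add {a b : ℤ × ℤ} (hd : det a b = 1) :
    IsCoprime (a.1 + b.1) (a.2 + b.2) := by
  exact isCoprime_of_det (v := (a.1 + b.1, a.2 + b.2)) (w := b)
    (Or.inl (by simp only [det] at hd ⊢; linarith))

lemma cop_sub {a b : ℤ × ℤ} (hd : det a b = 1) :
    IsCoprime (a.1 - b.1) (a.2 - b.2) := by
  exact isCoprime_of_det (v := (a.1 - b.1, a.2 - b.2)) (w := b)
    (Or.inl (by simp only [det] at hd ⊢; linarith))

lemma key (a b : CP) (hd : det a.1 b.1 = 1) :
    {γ : Qhat | Frel γ ⟦a⟧ ∧ Frel γ ⟦b⟧} =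
      {Qhat.mk (a.1.1 + b.1.1, a.1.2 + b.1.2) (cop_add hd),
       Qhat.mk (a.1.1 - b.1.1, a.1.2 - b.1.2) (cop_sub hd)} := by
  ext γ
  induction γ using Quotient.inductionOn with
  | h g =>
    show Frel ⟦g⟧ ⟦a⟧ ∧ Frel ⟦g⟧ ⟦b⟧ ↔ (⟦g⟧ : Qhat) = _ ∨ (⟦g⟧ : Qhat) = _
    constructor
    · rintro ⟨hga, hgb⟩
      have hga : FareyPair g.1 a.1 := hga
      have hgb : FareyPair g.1 b.1 := hgb
      have hform : ∀ x y : ℤ, det g.1 b.1 = x → det g.1 a.1 = y →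
          g.1 = (x * a.1.1 - y * b.1.1, x * a.1.2 - y * b.1.2) := by
        intro x y hx hy
        simp only [det] at hd hx hy
        have h1 : g.1.1 = x * a.1.1 - y * b.1.1 := by
          linear_combination a.1.1 * hx - b.1.1 * hy - g.1.1 * hd
        have h2 : g.1.2 = x * a.1.2 - y * b.1.2 := by
          linear_combination a.1.2 * hx - b.1.2 * hy - g.1.2 * hd
        exact Prod.ext h1 h2
      rcases hgb with hx | hx <;> rcases hga with hy | hy
      · -- x=1, y=1 : g = a - b
        right
        exact Quotient.sound (Or.inl (by
          rw [hform 1 1 hx hy, Prod.mk.injEq]; constructor <;> ring))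
      · -- x=1, y=-1 : g = a + b
        left
        exact Quotient.sound (Or.inl (by
          rw [hform 1 (-1) hx hy, Prod.mk.injEq]; constructor <;> ring))
      · -- x=-1, y=1 : g = -(a+b)
        left
        refine Quotient.sound (Or.inr ?_)
        show g.1 = -_
        rw [hform (-1) 1 hx hy, Prod.neg_mk, Prod.mk.injEq]
        constructor <;> ring
      · -- x=-1, y=-1 : g = -(a-b)
        right
        refine Quotient.sound (Or.inr ?_)
        show g.1 = -_
        rw [hform (-1) (-1) hx hy, Prod.neg_mk, Prod.mk.injEq]
        constructor <;> ring
    · rintro (hg | hg)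
      · constructor
        · show FareyPair g.1 a.1
          have : FareyPair (a.1.1 + b.1.1, a.1.2 + b.1.2) a.1 := by
            right; simp only [det] at hd ⊢; linarith
          rcases Quotient.exact hg with he | he <;> rw [show (g.1 : ℤ × ℤ) = _ from he]
          · exact this
          · rwa [fareyPair_neg_left]
        · show FareyPair g.1 b.1
          have : FareyPair (a.1.1 + b.1.1, a.1.2 + b.1.2) b.1 := by
            left; simp only [det] at hd ⊢; linarith
          rcases Quotient.exact hg with he | he <;> rw [show (g.1 : ℤ × ℤ) = _ from he]
          · exact this
          · rwa [fareyPair_neg_left]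
      · constructor
        · show FareyPair g.1 a.1
          have : FareyPair (a.1.1 - b.1.1, a.1.2 - b.1.2) a.1 := by
            left; simp only [det] at hd ⊢; linarith
          rcases Quotient.exact hg with he | he <;> rw [show (g.1 : ℤ × ℤ) = _ from he]
          · exact this
          · rwa [fareyPair_neg_left]
        · show FareyPair g.1 b.1
          have : FareyPair (a.1.1 - b.1.1, a.1.2 - b.1.2) b.1 := by
            left; simp only [det] at hd ⊢; linarith
          rcases Quotient.exact hg with he | he <;> rw [show (g.1 : ℤ × ℤ) = _ from he]
          · exact this
          · rwa [fareyPair_neg_left]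

lemma key_ne (a b : CP) (hd : det a.1 b.1 = 1) :
    Qhat.mk (a.1.1 + b.1.1, a.1.2 + b.1.2) (cop_add hd) ≠
      Qhat.mk (a.1.1 - b.1.1, a.1.2 - b.1.2) (cop_sub hd) := by
  intro hEq
  rcases Quotient.exact hEq with he | he
  · have h1 : b.1.1 = 0 := by
      have := congrArg Prod.fst he; simp at this; linarith
    have h2 : b.1.2 = 0 := by
      have := congrArg Prod.snd he; simp at this; linarith
    have := b.2
    rw [h1, h2] at this
    exact not_isCoprime_zero_zero this
  · have h1 : a.1.1 = 0 := by
      have := congrArg Prod.fst he; simp [Prod.neg_mk] at this; linarith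
    have h2 : a.1.2 = 0 := by
      have := congrArg Prod.snd he; simp [Prod.neg_mk] at this; linarith
    have := a.2
    rw [h1, h2] at this
    exact not_isCoprime_zero_zero this

lemma main (a b : CP) (hd : det a.1 b.1 = 1) :
    {γ : Qhat | Frel γ ⟦a⟧ ∧ Frel γ ⟦b⟧}.ncard = 2 := by
  rw [key a b hd]
  exact Set.ncard_pair (key_ne a b hd)

theorem stmt_14 (α β : Qhat) (h : Frel α β) :
    {γ : Qhat | Frel γ α ∧ Frel γ β}.ncard = 2 := by
  induction α using Quotient.inductionOn with
  | h a =>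
  induction β using Quotient.inductionOn with
  | h b =>
    have h : FareyPair a.1 b.1 := h
    rcases h with hd | hd
    · exact main a b hd
    · have ha : (⟦a⟧ : Qhat) = ⟦(⟨-a.1, by
        have := a.2; rcases this with ⟨x, y, hxy⟩
        exact ⟨-x, -y, by simp only [Prod.fst_neg, Prod.snd_neg]; linarith⟩⟩ : CP)⟧ :=
        Quotient.sound (Or.inr (by simp))
      rw [ha]
      exact main _ b (by rw [show det (-a.1) b.1 = -(det a.1 b.1) from det_neg_left _ _, hd]; ring)
end
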